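/- arXiv:1910.11811 — 2 statements merged into one kernel-verified Lean document; each statement's English description precedes it below -/
import Mathlib

section
/- For permutation groups (A,V) and (B,W), the imprimitive wreath product A≀B belongs to DGR if and only if both A ∈ DGR and B ∈ DGR. -/
open scoped Classical

/-- The automorphism group of a colored graph, i.e. of a coloring of the
unordered pairs of distinct elements of `V` (values of `E` on diagonal pairs
are irrelevant). -/
def graphAut {V C : Type} (E : Sym2 V → C) : Subgroup (Equiv.Perm V) where
  carrier := {σ | ∀ v w : V, v ≠ w → E s(σ v, σ w) = E s(v, w)}
  one_mem' := by intro v w _; rfl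
  mul_mem' := by
    intro a b ha hb v w hvw
    have hb' := hb v w hvw
    have ha' := ha (b v) (b w) (fun h => hvw (b.injective h))
    simpa [Equiv.Perm.mul_apply] using ha'.trans hb'
  inv_mem' := by
    intro a ha v w hvw
    have h : a⁻¹ v ≠ a⁻¹ w := fun h => hvw (by simpa using congrArg a h)
    have := ha (a⁻¹ v) (a⁻¹ w) h
    simpa using this.symm

/-- The automorphism group of a colored digraph, i.e. of a coloring of the
ordered pairs of elements of `V`. -/
def digraphAut {V C : Type} (E : V → V → C) : Subgroup (Equiv.Perm V) where
  carrier := {σ | ∀ v w : V, E (σ v) (σ w) = E v w}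
  one_mem' := by intro v w; rfl
  mul_mem' := by
    intro a b ha hb v w
    simpa [Equiv.Perm.mul_apply] using (ha (b v) (b w)).trans (hb v w)
  inv_mem' := by
    intro a ha v w
    simpa using (ha (a⁻¹ v) (a⁻¹ w)).symm

/-- The automorphism group of a colored hypergraph, i.e. of a coloring of the
nonempty subsets of `W`. -/
def hyperAut {W C : Type} (E : Set W → C) : Subgroup (Equiv.Perm W) where
  carrier := {σ | ∀ X : Set W, X.Nonempty → E (⇑σ '' X) = E X}
  one_mem' := by intro X hX; simp
  mul_mem' := by
    intro a b ha hb X hX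
    have h1 : ⇑(a * b) '' X = ⇑a '' (⇑b '' X) := by
      rw [Equiv.Perm.coe_mul, Set.image_comp]
    rw [h1, ha _ (hX.image _), hb _ hX]
  inv_mem' := by
    intro a ha X hX
    have h1 : ⇑a '' (⇑a⁻¹ '' X) = X := by
      rw [← Set.image_comp]
      have : ⇑a ∘ ⇑a⁻¹ = id := by funext x; simp
      rw [this, Set.image_id]
    have := ha (⇑a⁻¹ '' X) (hX.image _)
    rw [h1] at this
    exact this.symm

/-- `A` belongs to the class GR: it is the automorphism group of some colored graph. -/
def IsGR {V : Type} (A : Subgroup (Equiv.Perm V)) : Prop :=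
  ∃ (C : Type) (E : Sym2 V → C), graphAut E = A

/-- `A` belongs to the class DGR: it is the automorphism group of some colored digraph. -/
def IsDGR {V : Type} (A : Subgroup (Equiv.Perm V)) : Prop :=
  ∃ (C : Type) (E : V → V → C), digraphAut E = A

/-- `B` belongs to the class BGR: it is the automorphism group of some colored hypergraph. -/
def IsBGR {W : Type} (B : Subgroup (Equiv.Perm W)) : Prop :=
  ∃ (C : Type) (E : Set W → C), hyperAut E = B

/-- `(A, V)` is (permutation isomorphic to) the trivial permutation group `I₂`
on a two-element set. -/
def IsI2 {V : Type} (A : Subgroup (Equiv.Perm V)) : Prop :=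
  A = ⊥ ∧ Nat.card V = 2

/-- The permutation group `A` acts transitively on `V`. -/
def permTransitive {V : Type} (A : Subgroup (Equiv.Perm V)) : Prop :=
  ∀ v w : V, ∃ a ∈ A, a v = w

/-- The orbit of a point under a permutation group. -/
def ptOrbit {V : Type} (A : Subgroup (Equiv.Perm V)) (v : V) : Set V :=
  {u | ∃ a ∈ A, a v = u}

/-- The orbit (2*-orbital) of an unordered pair under a permutation group. -/
def pairOrbit {V : Type} (A : Subgroup (Equiv.Perm V)) (p : Sym2 V) : Set (Sym2 V) :=
  {q | ∃ a ∈ A, Sym2.map ⇑a p = q}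

/-- The orbital of an ordered pair under a permutation group. -/
def orbital {V : Type} (A : Subgroup (Equiv.Perm V)) (x : V × V) : Set (V × V) :=
  {y | ∃ a ∈ A, (a x.1, a x.2) = y}

/-- The closure `cl(A)` of a permutation group `A`: the group of all permutations of `V`
mapping each 2*-orbital of `A` onto itself. -/
def grCl {V : Type} (A : Subgroup (Equiv.Perm V)) : Subgroup (Equiv.Perm V) where
  carrier := {σ | ∀ p : Sym2 V, ¬ p.IsDiag → Sym2.map ⇑σ '' pairOrbit A p = pairOrbit A p}
  one_mem' := by
    intro p hp
    rw [Equiv.Perm.coe_one, Sym2.map_id, Set.image_id]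
  mul_mem' := by
    intro a b ha hb p hp
    rw [Equiv.Perm.coe_mul, Sym2.map_comp, Set.image_comp, hb p hp, ha p hp]
  inv_mem' := by
    intro a ha p hp
    have h1 : Sym2.map ⇑a⁻¹ ∘ Sym2.map ⇑a = id := by
      rw [← Sym2.map_comp]
      have : ⇑a⁻¹ ∘ ⇑a = id := by funext x; simp
      rw [this, Sym2.map_id]
    conv_lhs => rw [← ha p hp, ← Set.image_comp, h1, Set.image_id]

/-- The permutation `α` transposes the orbitals of `A`: it maps every orbital
onto the orbital paired with it. -/
def TransposesOrbitals {V : Type} (A : Subgroup (Equiv.Perm V)) (α : Equiv.Perm V) : Prop :=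
  ∀ x : V × V, (fun y : V × V => (α y.1, α y.2)) '' orbital A x = Prod.swap '' orbital A x

/-- The rank of a permutation group: the (cardinal) number of its orbitals. -/
def orbRank {V : Type} (A : Subgroup (Equiv.Perm V)) : Cardinal :=
  Cardinal.mk {O : Set (V × V) // ∃ x, O = orbital A x}

/-- `nsp A`: the number of pairs `{O, O'}` of distinct mutually paired
(i.e. non-self-paired) orbitals of `A`. -/
noncomputable def nsp {V : Type} (A : Subgroup (Equiv.Perm V)) : ℕ :=
  Nat.card {O : Set (V × V) // (∃ x, O = orbital A x) ∧ Prod.swap '' O ≠ O} / 2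

/-- The type of orbits of a permutation group `(A, V)` on `V`. -/
def orbitType {V : Type} (A : Subgroup (Equiv.Perm V)) : Type :=
  {O : Set V // ∃ v, O = ptOrbit A v}

/-- The imprimitive wreath product `A ≀ B` of permutation groups `(A,V)` and `(B,W)`,
acting on `V × W`. -/
def imprimWr {V W : Type} (A : Subgroup (Equiv.Perm V)) (B : Subgroup (Equiv.Perm W)) :
    Subgroup (Equiv.Perm (V × W)) where
  carrier := {γ | ∃ β ∈ B, ∃ α : W → Equiv.Perm V, (∀ w, α w ∈ A) ∧
    ∀ p : V × W, γ p = (α p.2 p.1, β p.2)}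
  one_mem' := ⟨1, B.one_mem, fun _ => 1, fun _ => A.one_mem, fun p => rfl⟩
  mul_mem' := by
    rintro γ₁ γ₂ ⟨β₁, hβ₁, α₁, hα₁, h₁⟩ ⟨β₂, hβ₂, α₂, hα₂, h₂⟩
    refine ⟨β₁ * β₂, B.mul_mem hβ₁ hβ₂, fun w => α₁ (β₂ w) * α₂ w,
      fun w => A.mul_mem (hα₁ _) (hα₂ _), fun p => ?_⟩
    have h0 : (γ₁ * γ₂) p = γ₁ (γ₂ p) := rfl
    rw [h0, h₂ p, h₁ (α₂ p.2 p.1, β₂ p.2)]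
    rfl
  inv_mem' := by
    rintro γ ⟨β, hβ, α, hα, h⟩
    refine ⟨β⁻¹, B.inv_mem hβ, fun w => (α (β⁻¹ w))⁻¹,
      fun w => A.inv_mem (hα _), fun p => ?_⟩
    have key : γ ((α (β⁻¹ p.2))⁻¹ p.1, β⁻¹ p.2) = p := by
      rw [h]
      simp
    calc γ⁻¹ p = γ⁻¹ (γ ((α (β⁻¹ p.2))⁻¹ p.1, β⁻¹ p.2)) := by rw [key]
    _ = ((α (β⁻¹ p.2))⁻¹ p.1, β⁻¹ p.2) := by simp

/-- The wreath product `A Wr B` of permutation groups `(A,V)` and `(B,W)` in its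
product action on the set `V^W` of functions `W → V`. -/
def prodWr {V W : Type} (A : Subgroup (Equiv.Perm V)) (B : Subgroup (Equiv.Perm W)) :
    Subgroup (Equiv.Perm (W → V)) where
  carrier := {φ | ∃ β ∈ B, ∃ α : W → Equiv.Perm V, (∀ w, α w ∈ A) ∧
    ∀ (f : W → V) (w : W), φ f w = α w (f (β w))}
  one_mem' := ⟨1, B.one_mem, fun _ => 1, fun _ => A.one_mem, fun f w => rfl⟩
  mul_mem' := by
    rintro φ₁ φ₂ ⟨β₁, hβ₁, α₁, hα₁, h₁⟩ ⟨β₂, hβ₂, α₂, hα₂, h₂⟩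
    refine ⟨β₂ * β₁, B.mul_mem hβ₂ hβ₁, fun w => α₁ w * α₂ (β₁ w),
      fun w => A.mul_mem (hα₁ _) (hα₂ _), fun f w => ?_⟩
    have h0 : (φ₁ * φ₂) f = φ₁ (φ₂ f) := rfl
    rw [h0, h₁ (φ₂ f) w, h₂ f (β₁ w)]
    rfl
  inv_mem' := by
    rintro φ ⟨β, hβ, α, hα, h⟩
    refine ⟨β⁻¹, B.inv_mem hβ, fun w => (α (β⁻¹ w))⁻¹,
      fun w => A.inv_mem (hα _), fun f w => ?_⟩
    have hf : f = φ (φ⁻¹ f) := by simp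
    conv_rhs => rw [hf]
    rw [h (φ⁻¹ f) (β⁻¹ w)]
    simp

/-- The parallel multiple `B × I_T` of a permutation group `(B, W)`, acting on `W × T`. -/
def parMul {W : Type} (B : Subgroup (Equiv.Perm W)) (T : Type) :
    Subgroup (Equiv.Perm (W × T)) where
  carrier := {γ | ∃ β ∈ B, ∀ p : W × T, γ p = (β p.1, p.2)}
  one_mem' := ⟨1, B.one_mem, fun p => rfl⟩
  mul_mem' := by
    rintro γ₁ γ₂ ⟨β₁, hβ₁, h₁⟩ ⟨β₂, hβ₂, h₂⟩
    refine ⟨β₁ * β₂, B.mul_mem hβ₁ hβ₂, fun p => ?_⟩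
    have h0 : (γ₁ * γ₂) p = γ₁ (γ₂ p) := rfl
    rw [h0, h₂, h₁]
    rfl
  inv_mem' := by
    rintro γ ⟨β, hβ, h⟩
    refine ⟨β⁻¹, B.inv_mem hβ, fun p => ?_⟩
    have key : γ (β⁻¹ p.1, p.2) = p := by rw [h]; simp
    calc γ⁻¹ p = γ⁻¹ (γ (β⁻¹ p.1, p.2)) := by rw [key]
    _ = (β⁻¹ p.1, p.2) := by simp

/-- The composition `H2 ∘ H1` of a colored graph `H2` on `W` with a colored graph
`H1` on `V`: a colored graph on `V × W`. -/
noncomputable def compGraph {V W C : Type} (H2 : Sym2 W → C) (H1 : Sym2 V → C) :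
    Sym2 (V × W) → C :=
  Sym2.lift ⟨fun p q => if p.2 = q.2 then H1 s(p.1, q.1) else H2 s(p.2, q.2), by
    intro p q
    dsimp only
    by_cases h : p.2 = q.2
    · rw [if_pos h, if_pos h.symm, Sym2.eq_swap]
    · rw [if_neg h, if_neg (fun hh => h hh.symm), Sym2.eq_swap]⟩

lemma mem_digraphAut {V C : Type} {E : V → V → C} {σ : Equiv.Perm V} :
    σ ∈ digraphAut E ↔ ∀ v w, E (σ v) (σ w) = E v w := Iff.rfl

lemma mem_imprimWr {V W : Type} {A : Subgroup (Equiv.Perm V)} {B : Subgroup (Equiv.Perm W)}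
    {γ : Equiv.Perm (V × W)} : γ ∈ imprimWr A B ↔ ∃ β ∈ B, ∃ α : W → Equiv.Perm V,
      (∀ w, α w ∈ A) ∧ ∀ p : V × W, γ p = (α p.2 p.1, β p.2) := Iff.rfl

/-- Helper coloring for the "if" direction of stmt8. -/
noncomputable def wrE {V W CA CB : Type} (EA : V → V → CA) (EB : W → W → CB) :
    V × W → V × W → (CA × CB) ⊕ CB := fun p q =>
  if p.2 = q.2 then Sum.inl (EA p.1 q.1, EB p.2 p.2) else Sum.inr (EB p.2 q.2)

lemma wrE_same {V W CA CB : Type} (EA : V → V → CA) (EB : W → W → CB)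
    {p q : V × W} (h : p.2 = q.2) :
    wrE EA EB p q = Sum.inl (EA p.1 q.1, EB p.2 p.2) := if_pos h

lemma wrE_same' {V W CA CB : Type} (EA : V → V → CA) (EB : W → W → CB)
    (v v' : V) (w : W) :
    wrE EA EB (v, w) (v', w) = Sum.inl (EA v v', EB w w) := if_pos rfl

lemma wrE_ne {V W CA CB : Type} (EA : V → V → CA) (EB : W → W → CB)
    {p q : V × W} (h : p.2 ≠ q.2) :
    wrE EA EB p q = Sum.inr (EB p.2 q.2) := if_neg h

lemma orbital_smul {V : Type} (A : Subgroup (Equiv.Perm V)) {a : Equiv.Perm V}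
    (ha : a ∈ A) (x : V × V) : orbital A (a x.1, a x.2) = orbital A x := by
  ext y
  constructor
  · rintro ⟨g, hg, rfl⟩
    exact ⟨g * a, A.mul_mem hg ha, rfl⟩
  · rintro ⟨g, hg, rfl⟩
    refine ⟨g * a⁻¹, A.mul_mem hg (A.inv_mem ha), ?_⟩
    simp [Equiv.Perm.mul_apply]

/-- `A ≀ B ∈ DGR` iff both `A ∈ DGR` and `B ∈ DGR`. -/
theorem stmt8 {V W : Type} [Nontrivial V] [Nontrivial W]
    (A : Subgroup (Equiv.Perm V)) (B : Subgroup (Equiv.Perm W)) :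
    IsDGR (imprimWr A B) ↔ IsDGR A ∧ IsDGR B := by
  obtain ⟨v₀⟩ : Nonempty V := inferInstance
  obtain ⟨w₀⟩ : Nonempty W := inferInstance
  constructor
  · rintro ⟨C, E, hE⟩
    constructor
    · -- IsDGR A
      refine ⟨Set (V × V), fun v v' => orbital A (v, v'), ?_⟩
      apply le_antisymm
      · intro σ hσ
        rw [mem_digraphAut] at hσ
        have key : ∀ v v' : V, ∃ a ∈ A, a v = σ v ∧ a v' = σ v' := by
          intro v v'
          have h1 : (σ v, σ v') ∈ orbital A (v, v') := by
            rw [← hσ v v']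
            exact ⟨1, A.one_mem, rfl⟩
          obtain ⟨a, ha, h2⟩ := h1
          exact ⟨a, ha, congrArg Prod.fst h2, congrArg Prod.snd h2⟩
        have hSig : Equiv.prodCongr σ (Equiv.refl W) ∈ imprimWr A B := by
          rw [← hE, mem_digraphAut]
          intro p q
          obtain ⟨a, ha, h1, h2⟩ := key p.1 q.1
          have hγ : Equiv.prodCongr a (Equiv.refl W) ∈ imprimWr A B :=
            ⟨1, B.one_mem, fun _ => a, fun _ => ha,
              fun p => Prod.ext (by simp) (by simp)⟩
          rw [← hE, mem_digraphAut] at hγ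
          have h3 := hγ p q
          have e1 : (Equiv.prodCongr σ (Equiv.refl W)) p
              = (Equiv.prodCongr a (Equiv.refl W)) p := Prod.ext (by simp [h1]) (by simp)
          have e2 : (Equiv.prodCongr σ (Equiv.refl W)) q
              = (Equiv.prodCongr a (Equiv.refl W)) q := Prod.ext (by simp [h2]) (by simp)
          rw [e1, e2]
          exact h3
        obtain ⟨β, hβ, α, hα, hf⟩ := hSig
        have hv : ∀ v, σ v = α w₀ v := by
          intro v
          have h := hf (v, w₀)
          simp only [Equiv.prodCongr_apply, Prod.map, Equiv.refl_apply, Prod.mk.injEq] at h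
          exact h.1
        have : σ = α w₀ := Equiv.ext hv
        rw [this]
        exact hα w₀
      · intro a ha
        rw [mem_digraphAut]
        intro v v'
        exact orbital_smul A ha (v, v')
    · -- IsDGR B
      refine ⟨Set (W × W), fun w w' => orbital B (w, w'), ?_⟩
      apply le_antisymm
      · intro τ hτ
        rw [mem_digraphAut] at hτ
        have key : ∀ w w' : W, ∃ b ∈ B, b w = τ w ∧ b w' = τ w' := by
          intro w w'
          have h1 : (τ w, τ w') ∈ orbital B (w, w') := by
            rw [← hτ w w']
            exact ⟨1, B.one_mem, rfl⟩
          obtain ⟨b, hb, h2⟩ := h1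
          exact ⟨b, hb, congrArg Prod.fst h2, congrArg Prod.snd h2⟩
        have hT : Equiv.prodCongr (Equiv.refl V) τ ∈ imprimWr A B := by
          rw [← hE, mem_digraphAut]
          intro p q
          obtain ⟨b, hb, h1, h2⟩ := key p.2 q.2
          have hγ : Equiv.prodCongr (Equiv.refl V) b ∈ imprimWr A B :=
            ⟨b, hb, fun _ => 1, fun _ => A.one_mem,
              fun p => Prod.ext (by simp) (by simp)⟩
          rw [← hE, mem_digraphAut] at hγ
          have h3 := hγ p q
          have e1 : (Equiv.prodCongr (Equiv.refl V) τ) p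
              = (Equiv.prodCongr (Equiv.refl V) b) p := Prod.ext (by simp) (by simp [h1])
          have e2 : (Equiv.prodCongr (Equiv.refl V) τ) q
              = (Equiv.prodCongr (Equiv.refl V) b) q := Prod.ext (by simp) (by simp [h2])
          rw [e1, e2]
          exact h3
        obtain ⟨β, hβ, α, hα, hf⟩ := hT
        have hw : ∀ w, τ w = β w := by
          intro w
          have h := hf (v₀, w)
          simp only [Equiv.prodCongr_apply, Prod.map, Equiv.refl_apply, Prod.mk.injEq] at h
          exact h.2
        have : τ = β := Equiv.ext hw
        rw [this]
        exact hβ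
      · intro b hb
        rw [mem_digraphAut]
        intro w w'
        exact orbital_smul B hb (w, w')
  · rintro ⟨⟨CA, EA, hEA⟩, ⟨CB, EB, hEB⟩⟩
    refine ⟨(CA × CB) ⊕ CB, wrE EA EB, ?_⟩
    apply le_antisymm
    · intro σ hσ
      rw [mem_digraphAut] at hσ
      -- fibers are preserved
      have fib : ∀ p q : V × W, ((σ p).2 = (σ q).2 ↔ p.2 = q.2) := by
        intro p q
        have h := hσ p q
        constructor
        · intro hx
          by_contra hne
          rw [wrE_same EA EB hx, wrE_ne EA EB hne] at h
          cases h
        · intro hx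
          by_contra hne
          rw [wrE_ne EA EB hne, wrE_same EA EB hx] at h
          cases h
      set β₀ : W → W := fun w => (σ (v₀, w)).2 with hβ₀
      have hsnd : ∀ p : V × W, (σ p).2 = β₀ p.2 := fun p => (fib p (v₀, p.2)).2 rfl
      have hβinj : Function.Injective β₀ := by
        intro w w' h
        exact (fib (v₀, w) (v₀, w')).1 h
      have hβsurj : Function.Surjective β₀ := by
        intro w'
        refine ⟨(σ.symm (v₀, w')).2, ?_⟩
        have h := hsnd (σ.symm (v₀, w'))
        rw [Equiv.apply_symm_apply] at h
        exact h.symm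
      have hαinj : ∀ w, Function.Injective (fun v => (σ (v, w)).1) := by
        intro w v v' h
        have h2 : σ (v, w) = σ (v', w) :=
          Prod.ext h (by rw [hsnd (v, w), hsnd (v', w)])
        exact congrArg Prod.fst (σ.injective h2)
      have hαsurj : ∀ w, Function.Surjective (fun v => (σ (v, w)).1) := by
        intro w u
        set p := σ.symm (u, β₀ w) with hp
        have h1 : (σ p).2 = β₀ w := by rw [hp, Equiv.apply_symm_apply]
        have h2 : p.2 = w := hβinj (by rw [← hsnd p, h1])
        refine ⟨p.1, ?_⟩
        show (σ (p.1, w)).1 = u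
        have h3 : ((p.1, w) : V × W) = p := Prod.ext rfl h2.symm
        rw [h3, hp, Equiv.apply_symm_apply]
      refine ⟨Equiv.ofBijective β₀ ⟨hβinj, hβsurj⟩, ?_,
        fun w => Equiv.ofBijective (fun v => (σ (v, w)).1) ⟨hαinj w, hαsurj w⟩, ?_, ?_⟩
      · rw [← hEB, mem_digraphAut]
        intro w w'
        show EB (β₀ w) (β₀ w') = EB w w'
        by_cases hw : w = w'
        · subst hw
          have h := hσ (v₀, w) (v₀, w)
          rw [wrE_same EA EB rfl, wrE_same EA EB rfl] at h
          exact congrArg Prod.snd (Sum.inl.inj h)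
        · have hne : (σ (v₀, w)).2 ≠ (σ (v₀, w')).2 := fun hc => hw ((fib _ _).1 hc)
          have h := hσ (v₀, w) (v₀, w')
          rw [wrE_ne EA EB hne, wrE_ne EA EB hw] at h
          exact Sum.inr.inj h
      · intro w
        rw [← hEA, mem_digraphAut]
        intro v v'
        show EA ((σ (v, w)).1) ((σ (v', w)).1) = EA v v'
        have hsame : (σ (v, w)).2 = (σ (v', w)).2 := (fib _ _).2 rfl
        have h := hσ (v, w) (v', w)
        rw [wrE_same EA EB hsame, wrE_same' EA EB v v' w] at h
        exact congrArg Prod.fst (Sum.inl.inj h)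
      · intro p
        exact Prod.ext rfl (hsnd p)
    · intro γ hγ
      rw [mem_imprimWr] at hγ
      obtain ⟨β, hβ, α, hα, hf⟩ := hγ
      have hB' : β ∈ digraphAut EB := by rw [hEB]; exact hβ
      rw [mem_digraphAut]
      intro p q
      rw [hf p, hf q]
      obtain ⟨p1, p2⟩ := p
      obtain ⟨q1, q2⟩ := q
      dsimp only
      by_cases h : p2 = q2
      · subst h
        have hA' : α p2 ∈ digraphAut EA := by rw [hEA]; exact hα p2
        rw [wrE_same' EA EB _ _ _, wrE_same' EA EB _ _ _]
        exact congrArg Sum.inl (Prod.ext (hA' p1 q1) (hB' p2 p2))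
      · have hb2 : β p2 ≠ β q2 := fun hc => h (β.injective hc)
        rw [wrE_ne EA EB hb2, wrE_ne EA EB h]
        exact congrArg Sum.inr (hB' p2 q2)
end

section
/- Let W be a finite set of cardinality n and let A_n denote the alternating group acting on W. Let (A,V) be a permutation group with A ∈ DGR, and suppose that either no permutation of V transposes the orbitals of A, or A ∈ GR, or A = I_2. If rank(A) = n and nsp(A) is even, then the product-action wreath product A Wr A_n belongs to GR. -/
open scoped Classical

namespace Stmt18Aux

open Finset

section Orbitals

variable {V : Type} {A : Subgroup (Equiv.Perm V)}

lemma mem_orbital_self (x : V × V) : x ∈ orbital A x := ⟨1, A.one_mem, rfl⟩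

lemma orbital_eq_of_mem {x y : V × V} (h : y ∈ orbital A x) : orbital A y = orbital A x := by
  obtain ⟨a, ha, hax⟩ := h
  have h1 : a x.1 = y.1 := congrArg Prod.fst hax
  have h2 : a x.2 = y.2 := congrArg Prod.snd hax
  ext z
  constructor
  · rintro ⟨b, hb, hbz⟩
    refine ⟨b * a, A.mul_mem hb ha, ?_⟩
    simp only [Equiv.Perm.mul_apply, h1, h2]
    exact hbz
  · rintro ⟨b, hb, hbz⟩
    refine ⟨b * a⁻¹, A.mul_mem hb (A.inv_mem ha), ?_⟩
    have h1' : a⁻¹ y.1 = x.1 := by rw [← h1]; simp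
    have h2' : a⁻¹ y.2 = x.2 := by rw [← h2]; simp
    simp only [Equiv.Perm.mul_apply, h1', h2']
    exact hbz

lemma orbital_apply {a : Equiv.Perm V} (ha : a ∈ A) (x : V × V) :
    orbital A (a x.1, a x.2) = orbital A x :=
  orbital_eq_of_mem ⟨a, ha, rfl⟩

lemma mem_swap_image {S : Set (V × V)} {z : V × V} :
    z ∈ Prod.swap '' S ↔ z.swap ∈ S := by
  constructor
  · rintro ⟨y, hy, rfl⟩; simpa using hy
  · intro h; exact ⟨z.swap, h, by simp⟩

lemma swap_image_orbital (x : V × V) :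
    Prod.swap '' orbital A x = orbital A (x.2, x.1) := by
  ext ⟨z1, z2⟩
  rw [mem_swap_image]
  constructor
  · rintro ⟨a, ha, haz⟩
    simp only [Prod.swap_prod_mk, Prod.mk.injEq] at haz
    exact ⟨a, ha, by simp only [Prod.mk.injEq]; exact ⟨haz.2, haz.1⟩⟩
  · rintro ⟨a, ha, haz⟩
    simp only [Prod.mk.injEq] at haz
    exact ⟨a, ha, by simp only [Prod.swap_prod_mk, Prod.mk.injEq]; exact ⟨haz.2, haz.1⟩⟩

lemma swap_swap_image (S : Set (V × V)) : Prod.swap '' (Prod.swap '' S) = S := by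
  rw [← Set.image_comp]
  have : (Prod.swap ∘ Prod.swap : V × V → V × V) = id := by
    funext z; simp
  rw [this, Set.image_id]

lemma orbital_diag_subset (u : V) : orbital A (u, u) ⊆ {p : V × V | p.1 = p.2} := by
  intro z hz
  obtain ⟨a, _, rfl⟩ := hz
  rfl

lemma orbital_fst_ne_snd {u v : V} (h : u ≠ v) {z : V × V}
    (hz : z ∈ orbital A (u, v)) : z.1 ≠ z.2 := by
  obtain ⟨a, _, rfl⟩ := hz
  exact fun hh => h (a.injective hh)

lemma orbital_ne_of_diag_of_nondiag {c u v : V} (h : u ≠ v) :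
    orbital A (u, v) ≠ orbital A (c, c) := by
  intro he
  have : (u, v) ∈ orbital A (c, c) := he ▸ mem_orbital_self (u, v)
  exact h (orbital_diag_subset c this)

lemma swap_image_diag_orbital (c : V) :
    Prod.swap '' orbital A (c, c) = orbital A (c, c) := swap_image_orbital (c, c)

lemma mem_ptOrbit_self (v : V) : v ∈ ptOrbit A v := ⟨1, A.one_mem, rfl⟩

lemma diag_mem_orbital {u v : V} (h : v ∈ ptOrbit A u) : (v, v) ∈ orbital A (u, u) := by
  obtain ⟨a, ha, rfl⟩ := h
  exact ⟨a, ha, rfl⟩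

end Orbitals

section PairOrbit

variable {X : Type} {G : Subgroup (Equiv.Perm X)}

lemma sym2_map_map (a b : Equiv.Perm X) (p : Sym2 X) :
    Sym2.map ⇑a (Sym2.map ⇑b p) = Sym2.map ⇑(a * b) p := by
  rw [Equiv.Perm.coe_mul, Sym2.map_comp]
  rfl

lemma mem_pairOrbit_self (p : Sym2 X) : p ∈ pairOrbit G p :=
  ⟨1, G.one_mem, by rw [Equiv.Perm.coe_one, Sym2.map_id, id_eq]⟩

lemma pairOrbit_eq_of_mem {p q : Sym2 X} (h : q ∈ pairOrbit G p) :
    pairOrbit G q = pairOrbit G p := by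
  obtain ⟨a, ha, rfl⟩ := h
  ext r
  constructor
  · rintro ⟨b, hb, rfl⟩
    exact ⟨b * a, G.mul_mem hb ha, (sym2_map_map b a p).symm⟩
  · rintro ⟨b, hb, rfl⟩
    refine ⟨b * a⁻¹, G.mul_mem hb (G.inv_mem ha), ?_⟩
    rw [sym2_map_map, mul_assoc, inv_mul_cancel, mul_one]

end PairOrbit

end Stmt18Aux
namespace Stmt18Aux

open Finset

section Hamming

variable {V W : Type} [Fintype W]

/-- Hamming distance on `W → V`. -/
noncomputable def hd (f g : W → V) : ℕ := (univ.filter fun w => f w ≠ g w).card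

lemma hd_comm (f g : W → V) : hd f g = hd g f := by
  unfold hd
  congr 1
  apply filter_congr
  intro w _
  exact ne_comm

lemma hd_eq_zero_iff {f g : W → V} : hd f g = 0 ↔ f = g := by
  unfold hd
  rw [Finset.card_eq_zero, Finset.filter_eq_empty_iff]
  constructor
  · intro h; funext w; have := h (mem_univ w); simpa using this
  · intro h w _; simp [h]

lemma two_le_hd {f g : W → V} {a b : W} (hab : a ≠ b) (ha : f a ≠ g a) (hb : f b ≠ g b) :
    2 ≤ hd f g := by
  unfold hd
  have h1 : ({a, b} : Finset W) ⊆ univ.filter fun w => f w ≠ g w := by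
    intro w hw
    rcases Finset.mem_insert.mp hw with rfl | hw
    · exact mem_filter.mpr ⟨mem_univ _, ha⟩
    · rw [Finset.mem_singleton] at hw; subst hw
      exact mem_filter.mpr ⟨mem_univ _, hb⟩
  calc 2 = ({a, b} : Finset W).card := (Finset.card_pair hab).symm
  _ ≤ _ := Finset.card_le_card h1

lemma hd_le_one {f g : W → V} {t : W} (h : ∀ w, w ≠ t → f w = g w) : hd f g ≤ 1 := by
  unfold hd
  have h1 : (univ.filter fun w => f w ≠ g w) ⊆ {t} := by
    intro w hw
    rw [Finset.mem_singleton]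
    by_contra hwt
    exact (mem_filter.mp hw).2 (h w hwt)
  calc _ ≤ ({t} : Finset W).card := Finset.card_le_card h1
  _ = 1 := Finset.card_singleton t

lemma hd_eq_one_iff {f g : W → V} :
    hd f g = 1 ↔ ∃ t, f t ≠ g t ∧ ∀ w, w ≠ t → f w = g w := by
  unfold hd
  rw [Finset.card_eq_one]
  constructor
  · rintro ⟨t, ht⟩
    have htm : t ∈ univ.filter fun w => f w ≠ g w := ht ▸ Finset.mem_singleton_self t
    refine ⟨t, (mem_filter.mp htm).2, fun w hw => ?_⟩
    by_contra hc
    have : w ∈ ({t} : Finset W) := ht ▸ mem_filter.mpr ⟨mem_univ _, hc⟩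
    exact hw (Finset.mem_singleton.mp this)
  · rintro ⟨t, ht1, ht2⟩
    refine ⟨t, ?_⟩
    ext w
    simp only [mem_filter, mem_univ, true_and, Finset.mem_singleton]
    constructor
    · intro hw; by_contra hwt; exact hw (ht2 w hwt)
    · rintro rfl; exact ht1

lemma card_filter_comp_equiv (e : Equiv.Perm W) (p : W → Prop) :
    (univ.filter fun w => p (e w)).card = (univ.filter p).card := by
  apply Finset.card_bij (fun w _ => e w)
  · intro w hw
    exact mem_filter.mpr ⟨mem_univ _, (mem_filter.mp hw).2⟩
  · intro a _ b _ h
    exact e.injective h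
  · intro y hy
    refine ⟨e.symm y, mem_filter.mpr ⟨mem_univ _, ?_⟩, by simp⟩
    simpa using (mem_filter.mp hy).2

lemma hd_wreath (β : Equiv.Perm W) (α : W → Equiv.Perm V) (f g : W → V) :
    hd (fun w => α w (f (β w))) (fun w => α w (g (β w))) = hd f g := by
  unfold hd
  apply Finset.card_bij (fun w _ => β w)
  · intro w hw
    refine mem_filter.mpr ⟨mem_univ _, fun he => ?_⟩
    exact (mem_filter.mp hw).2 (congrArg (α w) he)
  · intro a _ b _ h
    exact β.injective h
  · intro y hy
    refine ⟨β.symm y, mem_filter.mpr ⟨mem_univ _, fun he => ?_⟩, by simp⟩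
    have h2 := (α (β.symm y)).injective he
    rw [β.apply_symm_apply] at h2
    exact (mem_filter.mp hy).2 h2

variable [DecidableEq W]

lemma hd_split (x h : W → V) (w : W) :
    hd x h = ((univ.erase w).filter fun w' => x w' ≠ h w').card
      + (if x w ≠ h w then 1 else 0) := by
  have hu : (univ : Finset W) = insert w (univ.erase w) := (Finset.insert_erase (mem_univ w)).symm
  conv_lhs => rw [hd, hu, Finset.filter_insert]
  have hnm : w ∉ (univ.erase w).filter fun w' => x w' ≠ h w' :=
    fun hmem => (Finset.notMem_erase w univ) (Finset.mem_of_mem_filter w hmem)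
  by_cases hc : x w ≠ h w
  · rw [if_pos hc, if_pos hc, Finset.card_insert_of_notMem hnm]
  · rw [if_neg hc, if_neg hc, add_zero]

lemma filter_erase_update (x f1 : W → V) (w : W) (v' : V) :
    ((univ.erase w).filter fun w' => x w' ≠ Function.update f1 w v' w')
      = ((univ.erase w).filter fun w' => x w' ≠ f1 w') := by
  apply filter_congr
  intro w' hw'
  rw [Function.update_of_ne (Finset.ne_of_mem_erase hw')]

lemma hd_update_split (x f1 : W → V) (w : W) (v' : V) :
    hd x (Function.update f1 w v')
      = ((univ.erase w).filter fun w' => x w' ≠ f1 w').card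
        + (if x w ≠ v' then 1 else 0) := by
  rw [hd_split x _ w, filter_erase_update, Function.update_self]

end Hamming

end Stmt18Aux
namespace Stmt18Aux

open Finset

section Rigidity

variable {V W : Type} [Fintype W] [DecidableEq W] [Nontrivial V]

theorem hamming_rigid (σ : Equiv.Perm (W → V))
    (hσ : ∀ f g : W → V, hd (σ f) (σ g) = hd f g) :
    ∃ (β : Equiv.Perm W) (α : W → Equiv.Perm V), ∀ f w, σ f w = (α w) (f (β w)) := by
  classical
  obtain ⟨c⟩ := (inferInstance : Nonempty V)
  obtain ⟨cc, hcc⟩ := exists_ne c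
  set f0 : W → V := fun _ => c with hf0def
  set f1 : W → V := σ f0 with hf1def
  set E : W → V → (W → V) := fun s v => Function.update f0 s v with hEdef
  have hE_at : ∀ s v, E s v s = v := fun s v => Function.update_self s v f0
  have hE_off : ∀ s v w, w ≠ s → E s v w = c := fun s v w hw => Function.update_of_ne hw v f0
  have hdE : ∀ s v, v ≠ c → hd f0 (E s v) = 1 := by
    intro s v hv
    rw [hd_eq_one_iff]
    exact ⟨s, by rw [hE_at]; exact fun h => hv h.symm,
      fun w hw => (hE_off s v w hw).symm⟩
  have hdEE : ∀ s v v', v ≠ v' → hd (E s v) (E s v') = 1 := by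
    intro s v v' hv
    rw [hd_eq_one_iff]
    exact ⟨s, by rw [hE_at, hE_at]; exact hv,
      fun w hw => by rw [hE_off _ _ _ hw, hE_off _ _ _ hw]⟩
  have himg : ∀ s v, v ≠ c → hd f1 (σ (E s v)) = 1 := by
    intro s v hv
    rw [hf1def, hσ]
    exact hdE s v hv
  have hspec : ∀ s : W, ∃ t, f1 t ≠ σ (E s cc) t ∧ ∀ w, w ≠ t → f1 w = σ (E s cc) w :=
    fun s => hd_eq_one_iff.1 (himg s cc hcc)
  choose bs hbs1 hbs2 using hspec
  -- line stability
  have hstab : ∀ s v, v ≠ c →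
      (∀ w, w ≠ bs s → σ (E s v) w = f1 w) ∧ σ (E s v) (bs s) ≠ f1 (bs s) := by
    intro s v hv
    obtain ⟨t, ht1, ht2⟩ := hd_eq_one_iff.1 (himg s v hv)
    have htbs : t = bs s := by
      by_cases hvc : v = cc
      · subst hvc
        by_contra hne
        exact hbs1 s (ht2 (bs s) (fun h => hne h.symm))
      · by_contra htne
        have h2 : hd (σ (E s v)) (σ (E s cc)) = 1 := by rw [hσ]; exact hdEE s v cc hvc
        have hA : σ (E s v) t ≠ σ (E s cc) t := by
          intro he
          exact ht1 (by rw [he, ← hbs2 s t htne])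
        have hB : σ (E s v) (bs s) ≠ σ (E s cc) (bs s) := by
          intro he
          have e1 : σ (E s v) (bs s) = f1 (bs s) := (ht2 (bs s) (fun h => htne h.symm)).symm
          exact hbs1 s (by rw [← he, e1])
        have := two_le_hd htne hA hB
        omega
    subst htbs
    exact ⟨fun w hw => (ht2 w hw).symm, fun h => ht1 h.symm⟩
  -- injectivity of the base map
  have hbinj : Function.Injective bs := by
    intro s s' hss
    by_contra hne
    have h2 : 2 ≤ hd (σ (E s cc)) (σ (E s' cc)) := by
      rw [hσ]
      refine two_le_hd hne ?_ ?_
      · rw [hE_at, hE_off s' cc s hne]; exact hcc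
      · rw [hE_at, hE_off s cc s' (fun h => hne h.symm)]; exact fun h => hcc h.symm
    have h1 : hd (σ (E s cc)) (σ (E s' cc)) ≤ 1 := by
      refine hd_le_one (t := bs s) fun w hw => ?_
      rw [(hstab s cc hcc).1 w hw, (hstab s' cc hcc).1 w (by rw [← hss]; exact hw)]
    omega
  have hbbij : Function.Bijective bs := Finite.injective_iff_bijective.1 hbinj
  set βE : Equiv.Perm W := Equiv.ofBijective bs hbbij with hβEdef
  set β : Equiv.Perm W := βE.symm with hβdef
  have hbsβ : ∀ w, bs (β w) = w := fun w => βE.apply_symm_apply w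
  have hβbs : ∀ s, β (bs s) = s := fun s => βE.symm_apply_apply s
  -- the coordinate maps
  set aF : W → V → V := fun w u => if u = c then f1 w else σ (E (β w) u) w with haFdef
  have haF_c : ∀ w, aF w c = f1 w := fun w => if_pos rfl
  have haF_ne : ∀ w u, u ≠ c → aF w u = σ (E (β w) u) w := fun w u hu => if_neg hu
  have hline : ∀ w u, u ≠ c →
      (∀ w', w' ≠ w → σ (E (β w) u) w' = f1 w') ∧ σ (E (β w) u) w ≠ f1 w := by
    intro w u hu
    have := hstab (β w) u hu
    rw [hbsβ w] at this
    exact this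
  have haFinj : ∀ w, Function.Injective (aF w) := by
    intro w u u' h
    by_cases hu : u = c <;> by_cases hu' : u' = c
    · rw [hu, hu']
    · exfalso
      rw [hu, haF_c, haF_ne w u' hu'] at h
      exact (hline w u' hu').2 h.symm
    · exfalso
      rw [hu', haF_c, haF_ne w u hu] at h
      exact (hline w u hu).2 h
    · rw [haF_ne w u hu, haF_ne w u' hu'] at h
      have hfun : σ (E (β w) u) = σ (E (β w) u') := by
        funext w'
        by_cases hw' : w' = w
        · rw [hw']; exact h
        · rw [(hline w u hu).1 w' hw', (hline w u' hu').1 w' hw']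
      have hE' := σ.injective hfun
      have := congrFun hE' (β w)
      rwa [hE_at, hE_at] at this
  have haFsurj : ∀ w, Function.Surjective (aF w) := by
    intro w y
    by_cases hy : y = f1 w
    · exact ⟨c, by rw [haF_c, hy]⟩
    · have hdg : hd f0 (σ.symm (Function.update f1 w y)) = 1 := by
        have h1 := (hσ f0 (σ.symm (Function.update f1 w y))).symm
        rw [σ.apply_symm_apply] at h1
        rw [h1, ← hf1def]
        rw [hd_eq_one_iff]
        exact ⟨w, by rw [Function.update_self]; exact fun h => hy h.symm,
          fun w' hw' => (Function.update_of_ne hw' y f1).symm⟩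
      obtain ⟨s', h1, h2⟩ := hd_eq_one_iff.1 hdg
      set u := σ.symm (Function.update f1 w y) s' with hudef
      have hu : u ≠ c := fun h => h1 ((rfl : f0 s' = c).trans h.symm)
      have hg0 : σ.symm (Function.update f1 w y) = E s' u := by
        funext w'
        by_cases hw' : w' = s'
        · rw [hw', hE_at]
        · rw [hE_off _ _ _ hw']
          exact (h2 w' hw').symm
      have hgs : σ (E s' u) = Function.update f1 w y := by
        rw [← hg0, σ.apply_symm_apply]
      have hbsw : bs s' = w := by
        by_contra hne
        have e1 : σ (E s' u) (bs s') ≠ f1 (bs s') := (hstab s' u hu).2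
        rw [hgs, Function.update_of_ne hne] at e1
        exact e1 rfl
      refine ⟨u, ?_⟩
      rw [haF_ne w u hu]
      have hβw : β w = s' := by rw [← hbsw, hβbs]
      rw [hβw, hgs]
      exact Function.update_self w y f1
  set α : W → Equiv.Perm V := fun w => Equiv.ofBijective (aF w) ⟨haFinj w, haFsurj w⟩
    with hαdef
  have hαa : ∀ w u, (α w) u = aF w u := fun w u => rfl
  -- agreement on f0 and on the lines
  have hagree0 : ∀ w, aF w (f0 (β w)) = f1 w := fun w => haF_c w
  have hagreeE : ∀ s v, v ≠ c → ∀ w, aF w (E s v (β w)) = σ (E s v) w := by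
    intro s v hv w
    by_cases hw : β w = s
    · rw [hw, hE_at, haF_ne w v hv, hw]
    · rw [hE_off _ _ _ hw, haF_c]
      have hwbs : w ≠ bs s := fun h => hw (by rw [h, hβbs])
      exact ((hstab s v hv).1 w hwbs).symm
  -- conclusion
  refine ⟨β, α, ?_⟩
  intro g w
  have hK : hd (σ g) f1 = hd (fun w' => aF w' (g (β w'))) f1 := by
    have h1 : hd (σ g) f1 = hd g f0 := by rw [hf1def]; exact hσ g f0
    have h2 : hd (fun w' => aF w' (g (β w'))) f1 = hd g f0 := by
      have hfe : f1 = fun w' => aF w' (f0 (β w')) := funext fun w' => (hagree0 w').symm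
      rw [hfe]
      exact hd_wreath β α g f0
    rw [h1, h2]
  have hP : ∀ v', v' ≠ f1 w →
      hd (σ g) (Function.update f1 w v')
        = hd (fun w' => aF w' (g (β w'))) (Function.update f1 w v') := by
    intro v' hv'
    obtain ⟨u, hu⟩ := haFsurj w v'
    have huc : u ≠ c := fun h => hv' (by rw [← hu, h, haF_c])
    have himgfun : σ (E (β w) u) = Function.update f1 w v' := by
      funext w'
      by_cases hw' : w' = w
      · rw [hw', Function.update_self, ← hu, haF_ne _ _ huc]
      · rw [Function.update_of_ne hw', (hline w u huc).1 w' hw']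
    have hτ : (fun w' => aF w' (E (β w) u (β w'))) = Function.update f1 w v' := by
      funext w'
      rw [hagreeE (β w) u huc w', himgfun]
    calc hd (σ g) (Function.update f1 w v') = hd (σ g) (σ (E (β w) u)) := by rw [himgfun]
    _ = hd g (E (β w) u) := hσ _ _
    _ = hd (fun w' => aF w' (g (β w'))) (fun w' => aF w' (E (β w) u (β w'))) :=
        (hd_wreath β α g (E (β w) u)).symm
    _ = hd (fun w' => aF w' (g (β w'))) (Function.update f1 w v') := by rw [hτ]
  -- profile comparison at coordinate w
  have E1 : ((univ.erase w).filter fun w' => σ g w' ≠ f1 w').card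
        + (if σ g w ≠ f1 w then 1 else 0)
      = ((univ.erase w).filter fun w' => aF w' (g (β w')) ≠ f1 w').card
        + (if aF w (g (β w)) ≠ f1 w then 1 else 0) := by
    rw [← hd_split (σ g) f1 w, ← hd_split (fun w' => aF w' (g (β w'))) f1 w]
    exact hK
  have E2 : ∀ v', v' ≠ f1 w →
      ((univ.erase w).filter fun w' => σ g w' ≠ f1 w').card
          + (if σ g w ≠ v' then 1 else 0)
        = ((univ.erase w).filter fun w' => aF w' (g (β w')) ≠ f1 w').card
          + (if aF w (g (β w)) ≠ v' then 1 else 0) := by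
    intro v' hv'
    rw [← hd_update_split (σ g) f1 w v',
      ← hd_update_split (fun w' => aF w' (g (β w'))) f1 w v']
    exact hP v' hv'
  show σ g w = (α w) (g (β w))
  rw [hαa]
  by_contra hxy
  by_cases h1 : σ g w = f1 w <;> by_cases h2 : aF w (g (β w)) = f1 w
  · exact hxy (h1.trans h2.symm)
  · have e1 := E1
    rw [if_neg (by simpa using h1), if_pos h2] at e1
    have e2 := E2 (aF w (g (β w))) h2
    rw [if_pos (by rw [h1] at hxy ⊢; exact hxy), if_neg (by simp)] at e2
    omega
  · have e1 := E1
    rw [if_pos h1, if_neg (by simpa using h2)] at e1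
    have e2 := E2 (σ g w) h1
    rw [if_neg (by simp), if_pos (fun h => hxy h.symm)] at e2
    omega
  · have e1 := E1
    rw [if_pos h1, if_pos h2] at e1
    have e2 := E2 (σ g w) h1
    rw [if_neg (by simp), if_pos (fun h => hxy h.symm)] at e2
    omega

end Rigidity

end Stmt18Aux
namespace Stmt18Aux

open Finset

section Sign

variable {W : Type} [Fintype W] [DecidableEq W]

lemma sign_involution : ∀ (N : ℕ) (m : Equiv.Perm W), (∀ w, m (m w) = w) →
    (univ.filter fun w => m w ≠ w).card = N →
    ∃ k, N = 2 * k ∧ Equiv.Perm.sign m = (-1) ^ k := by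
  intro N
  induction N using Nat.strong_induction_on with
  | _ N ih =>
    intro m hm hcard
    by_cases hN : (univ.filter fun w => m w ≠ w) = ∅
    · have hm1 : m = 1 := by
        ext w
        by_contra hw
        have hmem : w ∈ univ.filter fun w => m w ≠ w :=
          mem_filter.mpr ⟨mem_univ _, by simpa using hw⟩
        rw [hN] at hmem
        exact absurd hmem (Finset.notMem_empty w)
      refine ⟨0, ?_, ?_⟩
      · rw [← hcard, hN]; rfl
      · rw [hm1, pow_zero, map_one]
    · obtain ⟨w, hw⟩ := Finset.nonempty_of_ne_empty hN
      have hww : m w ≠ w := (mem_filter.mp hw).2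
      set m' := Equiv.swap w (m w) * m with hm'def
      have hkey : ∀ x, m' x = if x = w then w else if x = m w then m w else m x := by
        intro x
        rw [hm'def, Equiv.Perm.mul_apply]
        by_cases hx : x = w
        · rw [if_pos hx, hx]
          exact Equiv.swap_apply_right w (m w)
        · rw [if_neg hx]
          by_cases hx' : x = m w
          · rw [if_pos hx', hx', hm w]
            exact Equiv.swap_apply_left w (m w)
          · rw [if_neg hx']
            apply Equiv.swap_apply_of_ne_of_ne
            · intro h
              exact hx' (by rw [← hm x, h])
            · intro h
              exact hx (m.injective h)
      have hm'inv : ∀ x, m' (m' x) = x := by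
        intro x
        rw [hkey, hkey]
        by_cases hx : x = w
        · rw [if_pos hx, if_pos rfl, hx]
        · rw [if_neg hx]
          by_cases hx' : x = m w
          · rw [if_pos hx', if_neg hww, if_pos rfl, hx']
          · rw [if_neg hx']
            have h1 : m x ≠ w := fun h => hx' (by rw [← hm x, h])
            have h2 : m x ≠ m w := fun h => hx (m.injective h)
            rw [if_neg h1, if_neg h2, hm x]
      have hfilter : (univ.filter fun x => m' x ≠ x)
          = ((univ.filter fun x => m x ≠ x).erase w).erase (m w) := by
        ext x
        simp only [mem_filter, mem_univ, true_and, Finset.mem_erase]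
        rw [hkey]
        by_cases hx : x = w
        · simp [hx]
        · by_cases hx' : x = m w
          · simp [hx, hx']
            intro h
            exact h.symm
          · simp [hx, hx']
      have hmemw : w ∈ univ.filter fun x => m x ≠ x := hw
      have hmemmw : m w ∈ (univ.filter fun x => m x ≠ x).erase w := by
        rw [Finset.mem_erase]
        refine ⟨hww, mem_filter.mpr ⟨mem_univ _, ?_⟩⟩
        rw [hm w]
        exact fun h => hww h.symm
      have hcard' : ((univ.filter fun x => m' x ≠ x)).card = N - 2 := by
        rw [hfilter, Finset.card_erase_of_mem hmemmw, Finset.card_erase_of_mem hmemw, hcard]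
        omega
      have hN2 : 2 ≤ N := by
        have hsub : ({w, m w} : Finset W) ⊆ univ.filter fun x => m x ≠ x := by
          intro x hx
          rcases Finset.mem_insert.mp hx with rfl | hx
          · exact hmemw
          · rw [Finset.mem_singleton] at hx
            subst hx
            exact (Finset.mem_erase.mp hmemmw).2
        have hle := Finset.card_le_card hsub
        rw [Finset.card_pair (fun h => hww h.symm)] at hle
        omega
      obtain ⟨k', hk', hs'⟩ := ih (N - 2) (by omega) m' hm'inv hcard'
      refine ⟨k' + 1, by omega, ?_⟩
      have hsm : Equiv.Perm.sign m' = - Equiv.Perm.sign m := by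
        rw [hm'def, map_mul, Equiv.Perm.sign_swap (fun h => hww h.symm)]
        exact neg_one_mul _
      have hfin : Equiv.Perm.sign m = - Equiv.Perm.sign m' := by
        rw [hsm, neg_neg]
      rw [hfin, hs', pow_succ, mul_neg_one]

end Sign

end Stmt18Aux
namespace Stmt18Aux

open Finset

section Main

variable {V W : Type} [Nontrivial V] [Nontrivial W] [Fintype W] [DecidableEq W]
variable {A : Subgroup (Equiv.Perm V)}

/-- The pair-orbit preservation condition for `σ` w.r.t. a permutation group `G`. -/
def PP (G : Subgroup (Equiv.Perm (W → V))) (σ : Equiv.Perm (W → V)) : Prop :=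
  ∀ f g : W → V, f ≠ g → ∃ γ ∈ G, (γ f = σ f ∧ γ g = σ g) ∨ (γ f = σ g ∧ γ g = σ f)

lemma hd_of_prodWr {B : Subgroup (Equiv.Perm W)} {γ : Equiv.Perm (W → V)}
    (hγ : γ ∈ prodWr A B) (f g : W → V) : hd (γ f) (γ g) = hd f g := by
  obtain ⟨β, _, α, _, hform⟩ := hγ
  have h1 : γ f = fun w => α w (f (β w)) := funext fun w => hform f w
  have h2 : γ g = fun w => α w (g (β w)) := funext fun w => hform g w
  rw [h1, h2]
  exact hd_wreath β α f g

lemma PP_hd {B : Subgroup (Equiv.Perm W)} {σ : Equiv.Perm (W → V)}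
    (hPP : PP (prodWr A B) σ) (f g : W → V) : hd (σ f) (σ g) = hd f g := by
  by_cases hfg : f = g
  · subst hfg
    exact (hd_eq_zero_iff.2 rfl).trans (hd_eq_zero_iff.2 rfl).symm
  · obtain ⟨γ, hγ, hcase⟩ := hPP f g hfg
    rcases hcase with ⟨h1, h2⟩ | ⟨h1, h2⟩
    · rw [← h1, ← h2]
      exact hd_of_prodWr hγ f g
    · rw [← h1, ← h2]
      exact (hd_of_prodWr hγ g f).trans (hd_comm g f)

variable {σ : Equiv.Perm (W → V)} {β : Equiv.Perm W} {α : W → Equiv.Perm V}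

lemma F1 (hdec : ∀ f w, σ f w = α w (f (β w)))
    (hPP : PP (prodWr A (alternatingGroup W)) σ) :
    ∀ (w : W) (u v : V), u ≠ v →
      (α w u, α w v) ∈ orbital A (u, v) ∪ Prod.swap '' orbital A (u, v) := by
  classical
  intro w u v huv
  set f : W → V := fun _ => u with hfdef
  set g : W → V := Function.update f (β w) v with hgdef
  have hgval1 : g (β w) = v := Function.update_self (β w) v f
  have hgval2 : ∀ x, x ≠ β w → g x = u := fun x hx => Function.update_of_ne hx v f
  have hfg : f ≠ g := by
    intro h
    have := congrFun h (β w)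
    rw [hgval1] at this
    exact huv this
  obtain ⟨γ, hγ, hcase⟩ := hPP f g hfg
  obtain ⟨β', _, α', hα', hform⟩ := hγ
  have hσf : σ f w = α w u := by rw [hdec]
  have hσg : σ g w = α w v := by rw [hdec, hgval1]
  rcases hcase with ⟨h1, h2⟩ | ⟨h1, h2⟩
  · left
    have hne : γ f w ≠ γ g w := by
      rw [h1, h2, hσf, hσg]
      exact fun h => huv ((α w).injective h)
    have hβ'w : β' w = β w := by
      by_contra hne'
      apply hne
      rw [hform f w, hform g w, hgval2 (β' w) hne']
    have e1 : α w u = α' w u := by rw [← hσf, ← h1, hform f w, hβ'w]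
    have e2 : α w v = α' w v := by rw [← hσg, ← h2, hform g w, hβ'w, hgval1]
    rw [e1, e2]
    exact ⟨α' w, hα' w, rfl⟩
  · right
    have hne : γ f w ≠ γ g w := by
      rw [h1, h2, hσf, hσg]
      exact fun h => huv ((α w).injective h.symm)
    have hβ'w : β' w = β w := by
      by_contra hne'
      apply hne
      rw [hform f w, hform g w, hgval2 (β' w) hne']
    have e1 : α w u = α' w v := by rw [← hσf, ← h2, hform g w, hβ'w, hgval1]
    have e2 : α w v = α' w u := by rw [← hσg, ← h1, hform f w, hβ'w]
    rw [mem_swap_image]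
    show (α w v, α w u) ∈ orbital A (u, v)
    rw [e1, e2]
    exact ⟨α' w, hα' w, rfl⟩

lemma F0 (hdec : ∀ f w, σ f w = α w (f (β w)))
    (hPP : PP (prodWr A (alternatingGroup W)) σ) :
    ∀ (w : W) (u : V), α w u ∈ ptOrbit A u := by
  classical
  intro w u
  obtain ⟨v, hv⟩ := exists_ne u
  obtain ⟨w₀, hw₀⟩ := exists_ne w
  set f : W → V := fun _ => u with hfdef
  set g : W → V := Function.update f (β w₀) v with hgdef
  have hgval1 : g (β w₀) = v := Function.update_self (β w₀) v f
  have hgvalw : g (β w) = u :=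
    Function.update_of_ne (show β w ≠ β w₀ from fun h => hw₀ (β.injective h).symm) v f
  have hfg : f ≠ g := by
    intro h
    have := congrFun h (β w₀)
    rw [hgval1] at this
    exact hv this.symm
  obtain ⟨γ, hγ, hcase⟩ := hPP f g hfg
  obtain ⟨β', _, α', hα', hform⟩ := hγ
  have hσfw : σ f w = α w u := by rw [hdec]
  rcases hcase with ⟨h1, _⟩ | ⟨h1, _⟩
  · have e := hform f w
    rw [h1, hσfw] at e
    exact ⟨α' w, hα' w, e.symm⟩
  · have e : σ g w = α' w u := by rw [← h1, hform f w]
    have e2 : σ g w = α w u := by rw [hdec, hgvalw]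
    exact ⟨α' w, hα' w, by rw [← e, e2]⟩

lemma mem_of_preserving (hA : IsDGR A) {a : Equiv.Perm V}
    (h : ∀ u v : V, (a u, a v) ∈ orbital A (u, v)) : a ∈ A := by
  obtain ⟨C, E, hE⟩ := hA
  rw [← hE]
  show ∀ u v : V, E (a u) (a v) = E u v
  intro u v
  obtain ⟨b, hb, hbv⟩ := h u v
  have haut : b ∈ digraphAut E := by rw [hE]; exact hb
  have e1 : b u = a u := congrArg Prod.fst hbv
  have e2 : b v = a v := congrArg Prod.snd hbv
  rw [← e1, ← e2]
  exact haut u v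

lemma gr_branch (hgr : IsGR A) {a : Equiv.Perm V}
    (h : ∀ u v : V, u ≠ v → (a u, a v) ∈ orbital A (u, v) ∪ Prod.swap '' orbital A (u, v)) :
    ∀ u v : V, u ≠ v → (a u, a v) ∈ orbital A (u, v) := by
  obtain ⟨C, E, hE⟩ := hgr
  have hmem : a ∈ graphAut E := by
    show ∀ u v : V, u ≠ v → E s(a u, a v) = E s(u, v)
    intro u v huv
    rcases h u v huv with hc | hc
    · obtain ⟨b, hb, hbv⟩ := hc
      have e1 : b u = a u := congrArg Prod.fst hbv
      have e2 : b v = a v := congrArg Prod.snd hbv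
      have haut : b ∈ graphAut E := by rw [hE]; exact hb
      rw [← e1, ← e2]
      exact haut u v huv
    · rw [mem_swap_image] at hc
      obtain ⟨b, hb, hbv⟩ := hc
      have e1 : b u = a v := congrArg Prod.fst hbv
      have e2 : b v = a u := congrArg Prod.snd hbv
      have haut : b ∈ graphAut E := by rw [hE]; exact hb
      have h1 : E s(b u, b v) = E s(u, v) := haut u v huv
      rw [e1, e2] at h1
      rw [← h1, Sym2.eq_swap]
  have haA : a ∈ A := by rw [← hE]; exact hmem
  intro u v _
  exact ⟨a, haA, rfl⟩

lemma nsp_of_I2 (h : IsI2 A) : nsp A = 1 := by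
  classical
  obtain ⟨hbot, hcard⟩ := h
  have horb : ∀ x : V × V, orbital A x = {x} := by
    intro x
    ext z
    constructor
    · rintro ⟨a, ha, rfl⟩
      rw [hbot, Subgroup.mem_bot] at ha
      subst ha
      simp
    · intro hz
      rw [Set.mem_singleton_iff] at hz
      subst hz
      exact ⟨1, A.one_mem, by simp⟩
  have key : ∀ (O : Set (V × V)),
      ((∃ x, O = orbital A x) ∧ Prod.swap '' O ≠ O) ↔ (∃ x : V × V, x.1 ≠ x.2 ∧ O = {x}) := by
    intro O
    constructor
    · rintro ⟨⟨x, rfl⟩, hsw⟩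
      refine ⟨x, ?_, horb x⟩
      intro heq
      apply hsw
      rw [horb x, Set.image_singleton]
      congr 1
      exact Prod.ext heq.symm heq
    · rintro ⟨x, hx, rfl⟩
      refine ⟨⟨x, (horb x).symm⟩, ?_⟩
      rw [Set.image_singleton]
      intro heq
      have hm : Prod.swap x ∈ ({x} : Set (V × V)) := heq ▸ rfl
      rw [Set.mem_singleton_iff] at hm
      exact hx (congrArg Prod.fst hm).symm
  let F : {x : V × V // x.1 ≠ x.2} →
      {O : Set (V × V) // (∃ x, O = orbital A x) ∧ Prod.swap '' O ≠ O} :=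
    fun x => ⟨{x.val}, (key {x.val}).2 ⟨x.val, x.prop, rfl⟩⟩
  have hF : Function.Bijective F := by
    constructor
    · intro x y hxy
      have h1 : ({x.val} : Set (V × V)) = {y.val} := congrArg Subtype.val hxy
      exact Subtype.ext (Set.singleton_eq_singleton_iff.mp h1)
    · intro O
      obtain ⟨x, hx, hOx⟩ := (key O.1).1 O.2
      exact ⟨⟨x, hx⟩, Subtype.ext (show ({x} : Set (V × V)) = O.1 from hOx.symm)⟩
  have hcongr : Nat.card {O : Set (V × V) // (∃ x, O = orbital A x) ∧ Prod.swap '' O ≠ O}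
      = Nat.card {x : V × V // x.1 ≠ x.2} :=
    Nat.card_congr (Equiv.ofBijective F hF).symm
  have hfinV : Finite V := Nat.finite_of_card_ne_zero (by rw [hcard]; exact two_ne_zero)
  have fV : Fintype V := Fintype.ofFinite V
  have hcV : Fintype.card V = 2 := by rw [← Nat.card_eq_fintype_card, hcard]
  have e2 : V ≃ Fin 2 := Fintype.equivFinOfCardEq hcV
  have e3 : {x : V × V // x.1 ≠ x.2} ≃ {y : Fin 2 × Fin 2 // y.1 ≠ y.2} :=
    Equiv.subtypeEquiv (e2.prodCongr e2) (by
      intro x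
      constructor
      · intro hne he
        exact hne (e2.injective he)
      · intro hne he
        exact hne (congrArg e2 he))
  have hc2 : Nat.card {x : V × V // x.1 ≠ x.2} = 2 := by
    rw [Nat.card_congr e3, Nat.card_eq_fintype_card]
    decide
  unfold nsp
  rw [hcongr, hc2]

end Main

end Stmt18Aux
namespace Stmt18Aux

set_option linter.unusedSectionVars false

open Finset

section Main2

variable {V W : Type} [Nontrivial V] [Nontrivial W] [Fintype W] [DecidableEq W]
variable {A : Subgroup (Equiv.Perm V)}
variable {σ : Equiv.Perm (W → V)} {β : Equiv.Perm W} {α : W → Equiv.Perm V}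

/-- A flipped pair at one coordinate together with a preserved pair (in a
non-self-paired orbital) at another coordinate contradicts pair-orbit
preservation. -/
lemma kill (hdec : ∀ f w, σ f w = α w (f (β w)))
    (hPP : PP (prodWr A (alternatingGroup W)) σ)
    {wa wb : W} (hwab : wa ≠ wb)
    {ua va : V} (hune_a : ua ≠ va)
    (hflip_a : (α wa ua, α wa va) ∉ orbital A (ua, va))
    {ub vb : V} (hune_b : ub ≠ vb)
    (hnsp_b : Prod.swap '' orbital A (ub, vb) ≠ orbital A (ub, vb))
    (hpres_b : (α wb ub, α wb vb) ∈ orbital A (ub, vb)) : False := by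
  classical
  obtain ⟨c⟩ := (inferInstance : Nonempty V)
  have hsab : β wa ≠ β wb := fun h => hwab (β.injective h)
  set f : W → V := Function.update (Function.update (fun _ => c) (β wa) ua) (β wb) ub
    with hfdef
  set g : W → V := Function.update (Function.update (fun _ => c) (β wa) va) (β wb) vb
    with hgdef
  have hf_a : f (β wa) = ua := by
    rw [hfdef, Function.update_of_ne hsab, Function.update_self]
  have hf_b : f (β wb) = ub := by rw [hfdef, Function.update_self]
  have hf_c : ∀ x, x ≠ β wa → x ≠ β wb → f x = c := by
    intro x h1 h2
    rw [hfdef, Function.update_of_ne h2, Function.update_of_ne h1]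
  have hg_a : g (β wa) = va := by
    rw [hgdef, Function.update_of_ne hsab, Function.update_self]
  have hg_b : g (β wb) = vb := by rw [hgdef, Function.update_self]
  have hg_c : ∀ x, x ≠ β wa → x ≠ β wb → g x = c := by
    intro x h1 h2
    rw [hgdef, Function.update_of_ne h2, Function.update_of_ne h1]
  have hfg : f ≠ g := fun h => hune_a (by rw [← hf_a, ← hg_a, h])
  have hflipmem : (α wa ua, α wa va) ∈ orbital A (va, ua) := by
    rcases F1 hdec hPP wa ua va hune_a with h | h
    · exact absurd h hflip_a
    · rwa [swap_image_orbital] at h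
  have hTT' : orbital A (ua, va) ≠ orbital A (va, ua) :=
    fun h => hflip_a (h ▸ hflipmem)
  have hNN' : orbital A (ub, vb) ≠ orbital A (vb, ub) := by
    intro h
    apply hnsp_b
    rw [swap_image_orbital]
    exact h.symm
  have hTD : orbital A (ua, va) ≠ orbital A (c, c) := orbital_ne_of_diag_of_nondiag hune_a
  have hT'D : orbital A (va, ua) ≠ orbital A (c, c) :=
    orbital_ne_of_diag_of_nondiag (Ne.symm hune_a)
  have hND : orbital A (ub, vb) ≠ orbital A (c, c) := orbital_ne_of_diag_of_nondiag hune_b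
  have hN'D : orbital A (vb, ub) ≠ orbital A (c, c) :=
    orbital_ne_of_diag_of_nondiag (Ne.symm hune_b)
  have hQa : orbital A (σ f wa, σ g wa) = orbital A (va, ua) := by
    have e1 : σ f wa = α wa ua := by rw [hdec f wa, hf_a]
    have e2 : σ g wa = α wa va := by rw [hdec g wa, hg_a]
    rw [e1, e2]
    exact orbital_eq_of_mem hflipmem
  have hQb : orbital A (σ f wb, σ g wb) = orbital A (ub, vb) := by
    have e1 : σ f wb = α wb ub := by rw [hdec f wb, hf_b]
    have e2 : σ g wb = α wb vb := by rw [hdec g wb, hg_b]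
    rw [e1, e2]
    exact orbital_eq_of_mem hpres_b
  have hPval : ∀ x : W, (x = β wa ∧ orbital A (f x, g x) = orbital A (ua, va))
      ∨ (x = β wb ∧ orbital A (f x, g x) = orbital A (ub, vb))
      ∨ (orbital A (f x, g x) = orbital A (c, c)) := by
    intro x
    by_cases h1 : x = β wa
    · exact Or.inl ⟨h1, by rw [h1, hf_a, hg_a]⟩
    · by_cases h2 : x = β wb
      · exact Or.inr (Or.inl ⟨h2, by rw [h2, hf_b, hg_b]⟩)
      · exact Or.inr (Or.inr (by rw [hf_c x h1 h2, hg_c x h1 h2]))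
  have hPval' : ∀ x : W, (x = β wa ∧ orbital A (g x, f x) = orbital A (va, ua))
      ∨ (x = β wb ∧ orbital A (g x, f x) = orbital A (vb, ub))
      ∨ (orbital A (g x, f x) = orbital A (c, c)) := by
    intro x
    by_cases h1 : x = β wa
    · exact Or.inl ⟨h1, by rw [h1, hf_a, hg_a]⟩
    · by_cases h2 : x = β wb
      · exact Or.inr (Or.inl ⟨h2, by rw [h2, hf_b, hg_b]⟩)
      · exact Or.inr (Or.inr (by rw [hf_c x h1 h2, hg_c x h1 h2]))
  obtain ⟨γ, hγ, hcase⟩ := hPP f g hfg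
  obtain ⟨β', _, α', hα', hform⟩ := hγ
  rcases hcase with ⟨h1, h2⟩ | ⟨h1, h2⟩
  · -- γ f = σ f, γ g = σ g
    have hQP : ∀ w, orbital A (σ f w, σ g w) = orbital A (f (β' w), g (β' w)) := by
      intro w
      rw [← h1, ← h2, hform f w, hform g w]
      exact orbital_apply (hα' w) (f (β' w), g (β' w))
    have ha : orbital A (f (β' wa), g (β' wa)) = orbital A (va, ua) :=
      (hQP wa).symm.trans hQa
    rcases hPval (β' wa) with ⟨hx, he⟩ | ⟨hx, he⟩ | he
    · exact hTT' (he.symm.trans ha)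
    · have hb : orbital A (f (β' wb), g (β' wb)) = orbital A (ub, vb) :=
        (hQP wb).symm.trans hQb
      rcases hPval (β' wb) with ⟨hx2, he2⟩ | ⟨hx2, he2⟩ | he2
      · exact hTT' ((he2.symm.trans hb).trans (he.symm.trans ha))
      · exact hwab (β'.injective (hx.trans hx2.symm))
      · exact hND (hb.symm.trans he2)
    · exact hT'D (ha.symm.trans he)
  · -- γ f = σ g, γ g = σ f
    have hQP : ∀ w, orbital A (σ f w, σ g w) = orbital A (g (β' w), f (β' w)) := by
      intro w
      rw [← h2, ← h1, hform f w, hform g w]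
      exact orbital_apply (hα' w) (g (β' w), f (β' w))
    have ha : orbital A (g (β' wa), f (β' wa)) = orbital A (va, ua) :=
      (hQP wa).symm.trans hQa
    have hb : orbital A (g (β' wb), f (β' wb)) = orbital A (ub, vb) :=
      (hQP wb).symm.trans hQb
    rcases hPval' (β' wa) with ⟨hx, he⟩ | ⟨hx, he⟩ | he
    · rcases hPval' (β' wb) with ⟨hx2, he2⟩ | ⟨hx2, he2⟩ | he2
      · exact hwab (β'.injective (hx.trans hx2.symm))
      · exact hNN' (hb.symm.trans he2)
      · exact hND (hb.symm.trans he2)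
    · have hON'T' : orbital A (vb, ub) = orbital A (va, ua) := he.symm.trans ha
      rcases hPval' (β' wb) with ⟨hx2, he2⟩ | ⟨hx2, he2⟩ | he2
      · exact hNN' ((hb.symm.trans he2).trans hON'T'.symm)
      · exact hNN' (hb.symm.trans he2)
      · exact hND (hb.symm.trans he2)
    · exact hT'D (ha.symm.trans he)

/-- A permutation flipping every pair pointwise transposes the orbitals. -/
lemma transposes_of_pointwise {a : Equiv.Perm V}
    (h : ∀ u v : V, (a u, a v) ∈ Prod.swap '' orbital A (u, v)) :
    TransposesOrbitals A a := by
  have hinv : ∀ u v : V, (a⁻¹ u, a⁻¹ v) ∈ Prod.swap '' orbital A (u, v) := by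
    intro u v
    have h1 := h (a⁻¹ u) (a⁻¹ v)
    rw [mem_swap_image] at h1
    have h1' : (v, u) ∈ orbital A (a⁻¹ u, a⁻¹ v) := by simpa using h1
    have h2 : orbital A (v, u) = orbital A (a⁻¹ u, a⁻¹ v) := orbital_eq_of_mem h1'
    have h3 : (a⁻¹ u, a⁻¹ v) ∈ orbital A (v, u) := by
      rw [h2]
      exact mem_orbital_self _
    rw [mem_swap_image]
    have h4 : orbital A (u, v) = Prod.swap '' orbital A (v, u) :=
      (swap_image_orbital (v, u)).symm
    rw [h4, mem_swap_image]
    exact h3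
  intro x
  ext z
  constructor
  · rintro ⟨y, hy, rfl⟩
    have h1 := h y.1 y.2
    have h2 : orbital A (y.1, y.2) = orbital A x := by
      rw [Prod.mk.eta]
      exact orbital_eq_of_mem hy
    rw [h2] at h1
    exact h1
  · intro hz
    refine ⟨(a⁻¹ z.1, a⁻¹ z.2), ?_, by simp⟩
    rw [mem_swap_image] at hz
    have h2 : orbital A (z.2, z.1) = orbital A x := orbital_eq_of_mem hz
    have h3 := hinv z.2 z.1
    rw [mem_swap_image] at h3
    have h4 : (a⁻¹ z.1, a⁻¹ z.2) ∈ orbital A (z.2, z.1) := h3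
    rw [h2] at h4
    exact h4

end Main2

end Stmt18Aux
namespace Stmt18Aux

set_option linter.unusedSectionVars false

open Finset

section Main3

variable {V W : Type} [Nontrivial V] [Nontrivial W] [Fintype W] [DecidableEq W]
variable {A : Subgroup (Equiv.Perm V)}
variable {σ : Equiv.Perm (W → V)} {β : Equiv.Perm W} {α : W → Equiv.Perm V}

lemma orbital_apply' {a : Equiv.Perm V} (ha : a ∈ A) (u v : V) :
    orbital A (a u, a v) = orbital A (u, v) := orbital_apply ha (u, v)

lemma caseI (hDGR : IsDGR A)
    (hdec : ∀ f w, σ f w = α w (f (β w)))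
    (hPP : PP (prodWr A (alternatingGroup W)) σ)
    (hω : Nonempty (W ≃ {O : Set (V × V) // ∃ x, O = orbital A x}))
    (hnsp : Even (nsp A))
    (hnoflip : ∀ (w : W) (u v : V), u ≠ v → (α w u, α w v) ∈ orbital A (u, v)) :
    σ ∈ prodWr A (alternatingGroup W) := by
  classical
  have hF0 := F0 (A := A) hdec hPP
  have hall : ∀ (w : W) (u v : V), (α w u, α w v) ∈ orbital A (u, v) := by
    intro w u v
    by_cases huv : u = v
    · subst huv
      exact diag_mem_orbital (hF0 w u)
    · exact hnoflip w u v huv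
  have hαA : ∀ w, α w ∈ A := fun w => mem_of_preserving hDGR (hall w)
  obtain ⟨ω⟩ := hω
  have hrep : ∀ O : {O : Set (V × V) // ∃ x, O = orbital A x},
      O.1 = orbital A (Classical.choose O.2) := fun O => Classical.choose_spec O.2
  set xO : {O : Set (V × V) // ∃ x, O = orbital A x} → V × V := fun O => Classical.choose O.2
    with hxOdef
  set fs : W → V := fun w => (xO (ω w)).1 with hfsdef
  set gs : W → V := fun w => (xO (ω w)).2 with hgsdef
  have hPfg : ∀ w, orbital A (fs w, gs w) = (ω w).1 := by
    intro w
    show orbital A ((xO (ω w)).1, (xO (ω w)).2) = (ω w).1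
    rw [Prod.mk.eta]
    exact (hrep (ω w)).symm
  obtain ⟨u0, v0, huv0⟩ := exists_pair_ne V
  set O0 : {O : Set (V × V) // ∃ x, O = orbital A x} :=
    ⟨orbital A (u0, v0), ⟨(u0, v0), rfl⟩⟩ with hO0def
  have hfsgs : fs ≠ gs := by
    intro h
    have hw' : (xO (ω (ω.symm O0))).1 = (xO (ω (ω.symm O0))).2 := congrFun h (ω.symm O0)
    rw [Equiv.apply_symm_apply] at hw'
    have hx : xO O0 ∈ orbital A (u0, v0) := by
      have h6 : orbital A (u0, v0) = orbital A (xO O0) := hrep O0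
      rw [h6]
      exact mem_orbital_self _
    exact orbital_fst_ne_snd huv0 hx hw'
  have hQ : ∀ w, orbital A (σ fs w, σ gs w) = (ω (β w)).1 := by
    intro w
    rw [hdec fs w, hdec gs w, orbital_apply' (hαA w) (fs (β w)) (gs (β w))]
    exact hPfg (β w)
  obtain ⟨γ, hγ, hcase⟩ := hPP fs gs hfsgs
  obtain ⟨β', hβ', α', hα', hform⟩ := hγ
  rcases hcase with ⟨h1, h2⟩ | ⟨h1, h2⟩
  · -- straight case : β = β'
    have hQP : ∀ w, (ω (β w)).1 = (ω (β' w)).1 := by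
      intro w
      rw [← hQ w, ← h1, ← h2, hform fs w, hform gs w,
        orbital_apply' (hα' w) (fs (β' w)) (gs (β' w))]
      exact hPfg (β' w)
    have hββ' : β = β' := by
      apply Equiv.ext
      intro w
      exact ω.injective (Subtype.ext (hQP w))
    refine ⟨β, ?_, α, hαA, hdec⟩
    rw [hββ']
    exact hβ'
  · -- swapped case
    have hQP : ∀ w, (ω (β w)).1 = Prod.swap '' (ω (β' w)).1 := by
      intro w
      rw [← hQ w, ← h2, ← h1, hform fs w, hform gs w,
        orbital_apply' (hα' w) (gs (β' w)) (fs (β' w)), ← hPfg (β' w)]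
      exact (swap_image_orbital (fs (β' w), gs (β' w))).symm
    have hpair : ∀ O : {O : Set (V × V) // ∃ x, O = orbital A x},
        ∃ x, Prod.swap '' O.1 = orbital A x := by
      rintro ⟨O, x, rfl⟩
      exact ⟨(x.2, x.1), swap_image_orbital x⟩
    set mπ : W → W := fun w => ω.symm ⟨Prod.swap '' (ω w).1, hpair (ω w)⟩ with hmπdef
    have hmπval : ∀ w, (ω (mπ w)).1 = Prod.swap '' (ω w).1 := by
      intro w
      show (ω (ω.symm ⟨Prod.swap '' (ω w).1, hpair (ω w)⟩)).1 = Prod.swap '' (ω w).1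
      rw [Equiv.apply_symm_apply]
    have hmπinv : Function.Involutive mπ := by
      intro w
      apply ω.injective
      apply Subtype.ext
      rw [hmπval, hmπval, swap_swap_image]
    set mE : Equiv.Perm W := hmπinv.toPerm with hmEdef
    have hmEval : ∀ w, mE w = mπ w := fun w => rfl
    have hrel : β = mE * β' := by
      apply Equiv.ext
      intro w
      show β w = mE (β' w)
      apply ω.injective
      apply Subtype.ext
      rw [hQP w, hmEval, hmπval (β' w)]
    have hsβ' : Equiv.Perm.sign β' = 1 := Equiv.Perm.mem_alternatingGroup.mp hβ'
    have hmoved : ∀ w, (mE w ≠ w) ↔ (Prod.swap '' (ω w).1 ≠ (ω w).1) := by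
      intro w
      constructor
      · intro h hc
        apply h
        rw [hmEval]
        apply ω.injective
        apply Subtype.ext
        rw [hmπval w, hc]
      · intro h hc
        apply h
        rw [← hmπval w, ← hmEval]
        exact congrArg (fun t => (ω t).1) hc
    have h7 : Nat.card {w : W // mE w ≠ w} = (univ.filter fun w => mE w ≠ w).card := by
      rw [Nat.card_eq_fintype_card, Fintype.card_subtype]
    have hNS : ((univ.filter fun w => mE w ≠ w)).card
        = Nat.card {O : Set (V × V) // (∃ x, O = orbital A x) ∧ Prod.swap '' O ≠ O} := by
      rw [← h7]
      apply Nat.card_congr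
      refine Equiv.trans (Equiv.subtypeEquiv
        (q := fun O : {O : Set (V × V) // ∃ x, O = orbital A x} => Prod.swap '' O.1 ≠ O.1)
        ω hmoved) ?_
      exact { toFun := fun O => ⟨O.1.1, O.1.2, O.2⟩,
              invFun := fun O => ⟨⟨O.1, O.2.1⟩, O.2.2⟩,
              left_inv := fun O => rfl,
              right_inv := fun O => rfl }
    obtain ⟨k, hk, hsgn⟩ := sign_involution ((univ.filter fun w => mE w ≠ w).card) mE
      (fun w => hmπinv w) rfl
    have hkn : k = nsp A := by
      unfold nsp
      rw [← hNS, hk]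
      omega
    have hsgnβ : Equiv.Perm.sign β = 1 := by
      rw [hrel, map_mul, hsβ', mul_one, hsgn, hkn]
      exact Even.neg_one_pow hnsp
    exact ⟨β, Equiv.Perm.mem_alternatingGroup.mpr hsgnβ, α, hαA, hdec⟩

end Main3

end Stmt18Aux
/-- Let `W` be finite of cardinality `n`, and let `A ∈ DGR` be such that
either no permutation transposes the orbitals of `A`, or `A ∈ GR`, or `A = I₂`.
If `rank(A) = n` and `nsp(A)` is even, then `A Wr Aₙ ∈ GR`, where `Aₙ` is the
alternating group on `W`. -/
theorem stmt18 {V W : Type} [Nontrivial V] [Nontrivial W] [Fintype W] [DecidableEq W]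
    (n : ℕ) (hn : Fintype.card W = n)
    (A : Subgroup (Equiv.Perm V)) (hA : IsDGR A)
    (hA' : (¬ ∃ α : Equiv.Perm V, TransposesOrbitals A α) ∨ IsGR A ∨ IsI2 A)
    (hrank : orbRank A = (n : Cardinal)) (hnsp : Even (nsp A)) :
    IsGR (prodWr A (alternatingGroup W)) := by
  classical
  have hA'' : (¬ ∃ a : Equiv.Perm V, TransposesOrbitals A a) ∨ IsGR A := by
    rcases hA' with h | h | h
    · exact Or.inl h
    · exact Or.inr h
    · exfalso
      rw [Stmt18Aux.nsp_of_I2 h] at hnsp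
      obtain ⟨k, hk⟩ := hnsp
      omega
  refine ⟨Set (Sym2 (W → V)), fun p => pairOrbit (prodWr A (alternatingGroup W)) p, ?_⟩
  apply le_antisymm
  · -- hard direction : every automorphism of the orbit coloring lies in the wreath product
    intro σ hσ
    have hσ' : ∀ f g : W → V, f ≠ g →
        pairOrbit (prodWr A (alternatingGroup W)) s(σ f, σ g)
          = pairOrbit (prodWr A (alternatingGroup W)) s(f, g) := hσ
    have hPP : Stmt18Aux.PP (prodWr A (alternatingGroup W)) σ := by
      intro f g hfg
      have h1 : s(σ f, σ g) ∈ pairOrbit (prodWr A (alternatingGroup W)) s(f, g) := by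
        rw [← hσ' f g hfg]
        exact Stmt18Aux.mem_pairOrbit_self _
      obtain ⟨γ, hγ, hmap⟩ := h1
      rw [Sym2.map_pair_eq, Sym2.eq_iff] at hmap
      rcases hmap with ⟨e1, e2⟩ | ⟨e1, e2⟩
      · exact ⟨γ, hγ, Or.inl ⟨e1, e2⟩⟩
      · exact ⟨γ, hγ, Or.inr ⟨e1, e2⟩⟩
    have hdist : ∀ f g : W → V, Stmt18Aux.hd (σ f) (σ g) = Stmt18Aux.hd f g :=
      fun f g => Stmt18Aux.PP_hd hPP f g
    obtain ⟨β, α, hdec⟩ := Stmt18Aux.hamming_rigid σ hdist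
    by_cases hflip : ∀ (w : W) (u v : V), u ≠ v → (α w u, α w v) ∈ orbital A (u, v)
    · -- Case I : no coordinate permutation flips any orbital
      have hω : Nonempty (W ≃ {O : Set (V × V) // ∃ x, O = orbital A x}) := by
        have h1 : Cardinal.mk {O : Set (V × V) // ∃ x, O = orbital A x}
            = Cardinal.mk (Fin n) := by
          rw [Cardinal.mk_fin]
          exact hrank
        obtain ⟨e⟩ := Cardinal.eq.mp h1
        exact ⟨(Fintype.equivFinOfCardEq hn).trans e.symm⟩
      exact Stmt18Aux.caseI hA hdec hPP hω hnsp hflip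
    · -- Case II : some coordinate permutation flips some orbital
      push_neg at hflip
      obtain ⟨w₀, u, v, huv, hflip₀⟩ := hflip
      exfalso
      rcases hA'' with hnt | hgr
      · -- branch : no permutation transposes the orbitals
        have hmem' : (α w₀ u, α w₀ v) ∈ Prod.swap '' orbital A (u, v) := by
          rcases Stmt18Aux.F1 hdec hPP w₀ u v huv with h | h
          · exact absurd h hflip₀
          · exact h
        have hnsp_uv : Prod.swap '' orbital A (u, v) ≠ orbital A (u, v) := by
          intro h
          exact hflip₀ (h ▸ hmem')
        have hflipAll : ∀ (w : W) (u' v' : V), u' ≠ v' →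
            Prod.swap '' orbital A (u', v') ≠ orbital A (u', v') →
            (α w u', α w v') ∉ orbital A (u', v') := by
          intro w u' v' hu'v' hnsp' hpres
          by_cases hw : w = w₀
          · subst hw
            obtain ⟨w₁, hw₁⟩ := exists_ne w
            have hflip₁ : (α w₁ u, α w₁ v) ∉ orbital A (u, v) := by
              intro hpres₁
              exact Stmt18Aux.kill hdec hPP (Ne.symm hw₁) huv hflip₀ huv hnsp_uv hpres₁
            exact Stmt18Aux.kill hdec hPP hw₁ huv hflip₁ hu'v' hnsp' hpres
          · exact Stmt18Aux.kill hdec hPP (show w₀ ≠ w from fun h => hw h.symm) huv hflip₀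
              hu'v' hnsp' hpres
        have hpw : ∀ u' v' : V, (α w₀ u', α w₀ v') ∈ Prod.swap '' orbital A (u', v') := by
          intro u' v'
          by_cases hne : u' = v'
          · subst hne
            rw [Stmt18Aux.swap_image_diag_orbital]
            exact Stmt18Aux.diag_mem_orbital (Stmt18Aux.F0 hdec hPP w₀ u')
          · by_cases hsp : Prod.swap '' orbital A (u', v') = orbital A (u', v')
            · rcases Stmt18Aux.F1 hdec hPP w₀ u' v' hne with h | h
              · rw [hsp]
                exact h
              · exact h
            · rcases Stmt18Aux.F1 hdec hPP w₀ u' v' hne with h | h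
              · exact absurd h (hflipAll w₀ u' v' hne hsp)
              · exact h
        exact hnt ⟨α w₀, Stmt18Aux.transposes_of_pointwise hpw⟩
      · -- branch : A is a graph automorphism group
        exact hflip₀ (Stmt18Aux.gr_branch hgr (Stmt18Aux.F1 hdec hPP w₀) u v huv)
  · -- easy direction : the wreath product preserves the orbit coloring
    intro γ hγ
    show ∀ f g : W → V, f ≠ g →
      pairOrbit (prodWr A (alternatingGroup W)) s(γ f, γ g)
        = pairOrbit (prodWr A (alternatingGroup W)) s(f, g)
    intro f g hfg
    apply Stmt18Aux.pairOrbit_eq_of_mem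
    exact ⟨γ, hγ, by rw [Sym2.map_pair_eq]⟩
end
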